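/- Let P ⊆ ℝ^d be a full-dimensional lattice polytope with irredundant facet presentation h_i(p) = ⟨p,n_i⟩ + a_i ≥ 0 (i = 1,…,r), lattice points A = P ∩ ℤ^d, and positive weights w = (w_m)_{m∈A}. Assume Σ_{i=1}^r n_i = 0 and that β_w is a nonzero constant c on ℝ^d, and set a_P = Σ_{i=1}^r a_i. Then for every u = (u_m)_{m∈A} with u_+ := Σ_{m∈A} u_m > 0 and p = (1/u_+)·Σ_{m∈A} u_m·m, one has for every m ∈ A: w_m β_m(p)/β_w(p) = (w_m/c)·u_+^{−a_P}·∏_{i=1}^r ℓ_i(u)^{h_i(m)}, where ℓ_i(u) = Σ_{m'∈A} h_i(m')·u_{m'}. (This is the explicit Horn/ML-estimate formula determined by the lattice points of P.) -/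

import Mathlib

open Finset

noncomputable section

/-- Lattice distance function `h_i(p) = ⟨p, n_i⟩ + a_i` on `ℝ^d`. -/
def hR {d r : ℕ} (n : Fin r → Fin d → ℤ) (a : Fin r → ℤ) (i : Fin r) (p : Fin d → ℝ) : ℝ :=
  (∑ l, p l * (n i l : ℝ)) + (a i : ℝ)

/-- Lattice distance `h_i(m) = ⟨m, n_i⟩ + a_i` of a lattice point, an integer. -/
def hZ {d r : ℕ} (n : Fin r → Fin d → ℤ) (a : Fin r → ℤ) (i : Fin r) (m : Fin d → ℤ) : ℤ :=
  (∑ l, m l * n i l) + a i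

/-- The polytope `P = {p : h_i(p) ≥ 0 ∀ i}`. -/
def latticePolytope {d r : ℕ} (n : Fin r → Fin d → ℤ) (a : Fin r → ℤ) : Set (Fin d → ℝ) :=
  {p | ∀ i, 0 ≤ hR n a i p}

/-- Coercion of a lattice point of `ℤ^d` to `ℝ^d`. -/
def coeZ {d : ℕ} (m : Fin d → ℤ) : Fin d → ℝ := fun l => (m l : ℝ)

/-- Krasauskas toric blending polynomial `β_m(p) = ∏_i h_i(p)^{h_i(m)}` (with `0^0 = 1`). -/
def toricBeta {d r : ℕ} (n : Fin r → Fin d → ℤ) (a : Fin r → ℤ) (m : Fin d → ℤ)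
    (p : Fin d → ℝ) : ℝ :=
  ∏ i, hR n a i p ^ (hZ n a i m).toNat

/-- `β_w(p) = ∑_{m ∈ A} w_m β_m(p)`. -/
def toricBetaW {d r : ℕ} (n : Fin r → Fin d → ℤ) (a : Fin r → ℤ) (A : Finset (Fin d → ℤ))
    (w : (Fin d → ℤ) → ℝ) (p : Fin d → ℝ) : ℝ :=
  ∑ m ∈ A, w m * toricBeta n a m p

/-- `P` is a full-dimensional lattice polytope with irredundant facet presentation given by
`n_i, a_i` and lattice point set `A = P ∩ ℤ^d`. -/
def IsFacetPresentation {d r : ℕ} (n : Fin r → Fin d → ℤ) (a : Fin r → ℤ)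
    (A : Finset (Fin d → ℤ)) : Prop :=
  IsCompact (latticePolytope n a) ∧
  (interior (latticePolytope n a)).Nonempty ∧
  (∀ m : Fin d → ℤ, m ∈ A ↔ coeZ m ∈ latticePolytope n a) ∧
  latticePolytope n a = convexHull ℝ (coeZ '' (A : Set (Fin d → ℤ))) ∧
  (∀ i, ∃ p ∈ latticePolytope n a, hR n a i p = 0 ∧ ∀ k, k ≠ i → 0 < hR n a k p)

/-- `P` has strict linear precision for the weights `w`:
`β_w(p)·p = ∑_{m ∈ A} w_m β_m(p)·m` for all `p ∈ P`. -/
def StrictLinearPrecision {d r : ℕ} (n : Fin r → Fin d → ℤ) (a : Fin r → ℤ)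
    (A : Finset (Fin d → ℤ)) (w : (Fin d → ℤ) → ℝ) : Prop :=
  ∀ p ∈ latticePolytope n a,
    toricBetaW n a A w p • p = ∑ m ∈ A, (w m * toricBeta n a m p) • coeZ m

/-!
Since `p` is the `u`-weighted barycentre of the lattice points, each affine function `h_i`
takes the value `ℓ_i(u) / u_+` at `p`, so `β_m(p) = ∏_i ℓ_i(u)^{h_i(m)} / u_+^{Σ_i h_i(m)}`.
The normals summing to zero makes `Σ_i h_i(m) = a_P` for every `m`, and `β_w(p) = c`.
-/

section LatticeDistance

variable {d r : ℕ} (n : Fin r → Fin d → ℤ) (a : Fin r → ℤ)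

theorem hR_coeZ (i : Fin r) (m : Fin d → ℤ) : hR n a i (coeZ m) = hZ n a i m := by
  simp only [hR, hZ, coeZ]
  push_cast
  rfl

theorem hZ_nonneg_of_coeZ_mem {m : Fin d → ℤ} (hm : coeZ m ∈ latticePolytope n a) (i : Fin r) :
    0 ≤ hZ n a i m := by
  have := hm i
  rw [hR_coeZ] at this
  exact_mod_cast this

theorem sum_hZ_of_sum_normals_eq_zero (hsum : ∑ i, n i = 0) (m : Fin d → ℤ) :
    ∑ i, hZ n a i m = ∑ i, a i := by
  have hlin : ∑ i, ∑ l, m l * n i l = 0 := by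
    rw [Finset.sum_comm]
    refine Finset.sum_eq_zero fun l _ => ?_
    rw [← Finset.mul_sum, ← Finset.sum_apply, hsum, Pi.zero_apply, mul_zero]
  simp only [hZ, Finset.sum_add_distrib, hlin, zero_add]

theorem sum_toNat_hZ_of_sum_normals_eq_zero (hsum : ∑ i, n i = 0) {m : Fin d → ℤ}
    (hm : coeZ m ∈ latticePolytope n a) :
    ((∑ i, (hZ n a i m).toNat : ℕ) : ℤ) = ∑ i, a i := by
  push_cast
  simp only [Int.toNat_of_nonneg (hZ_nonneg_of_coeZ_mem n a hm _)]
  exact sum_hZ_of_sum_normals_eq_zero n a hsum m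

theorem hR_barycenter {ι : Type*} (A : Finset ι) (u : ι → ℝ) (x : ι → Fin d → ℤ)
    (hu : ∑ k ∈ A, u k ≠ 0) (i : Fin r) :
    hR n a i ((∑ k ∈ A, u k)⁻¹ • ∑ k ∈ A, u k • coeZ (x k)) =
      (∑ k ∈ A, (hZ n a i (x k) : ℝ) * u k) / ∑ k ∈ A, u k := by
  have hlin : ∑ l, (∑ k ∈ A, u k • coeZ (x k)) l * (n i l : ℝ) =
      ∑ k ∈ A, ((hZ n a i (x k) : ℝ) - a i) * u k := by
    simp only [Finset.sum_apply, Pi.smul_apply, smul_eq_mul, coeZ, Finset.sum_mul]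
    rw [Finset.sum_comm]
    refine Finset.sum_congr rfl fun k _ => ?_
    simp only [hZ]
    push_cast
    rw [add_sub_cancel_right, Finset.sum_mul]
    exact Finset.sum_congr rfl fun l _ => by ring
  have hsmul : ∀ l, ((∑ k ∈ A, u k)⁻¹ • ∑ k ∈ A, u k • coeZ (x k)) l * (n i l : ℝ) =
      (∑ k ∈ A, u k)⁻¹ * ((∑ k ∈ A, u k • coeZ (x k)) l * (n i l : ℝ)) := fun l => by
    rw [Pi.smul_apply, smul_eq_mul, mul_assoc]
  rw [hR, Finset.sum_congr rfl fun l _ => hsmul l, ← Finset.mul_sum, hlin, eq_div_iff hu]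
  simp only [sub_mul, Finset.sum_sub_distrib, ← Finset.mul_sum]
  field_simp
  ring

theorem toricBeta_of_hR_eq_div {L : Fin r → ℝ} {S : ℝ} {p : Fin d → ℝ}
    (h : ∀ i, hR n a i p = L i / S) (m : Fin d → ℤ) :
    toricBeta n a m p = (∏ i, L i ^ (hZ n a i m).toNat) / S ^ ∑ i, (hZ n a i m).toNat := by
  simp only [toricBeta, h, div_pow]
  rw [Finset.prod_div_distrib, Finset.prod_pow_eq_pow_sum]

end LatticeDistance

theorem horn_formula_of_constant_betaW_general {d r : ℕ}
    (n : Fin r → Fin d → ℤ) (a : Fin r → ℤ) (A : Finset (Fin d → ℤ))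
    (hP : IsFacetPresentation n a A)
    (w : (Fin d → ℤ) → ℝ)
    (hsum : (∑ i, n i) = 0)
    (c : ℝ) (hconst : ∀ p : Fin d → ℝ, toricBetaW n a A w p = c)
    (u : (Fin d → ℤ) → ℝ) (hu : 0 < ∑ m ∈ A, u m)
    (p : Fin d → ℝ) (hp : p = (∑ m ∈ A, u m)⁻¹ • ∑ m ∈ A, u m • coeZ m) :
    ∀ m ∈ A,
      w m * toricBeta n a m p / toricBetaW n a A w p =
        (w m / c) * (∑ m' ∈ A, u m') ^ (-(∑ i, a i) : ℤ) *
          ∏ i, (∑ m' ∈ A, (hZ n a i m' : ℝ) * u m') ^ (hZ n a i m).toNat := by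
  intro m hm
  have hp_val : ∀ i, hR n a i p =
      (∑ m' ∈ A, (hZ n a i m' : ℝ) * u m') / ∑ m' ∈ A, u m' := fun i => by
    rw [hp]
    exact hR_barycenter n a A u id hu.ne' i
  have hdeg := sum_toNat_hZ_of_sum_normals_eq_zero n a hsum ((hP.2.2.1 m).mp hm)
  rw [hconst p, toricBeta_of_hR_eq_div n a hp_val, ← hdeg, zpow_neg, zpow_natCast]
  simp only [div_eq_mul_inv]
  ring

/-- If the facet normals sum to zero and `β_w ≡ c ≠ 0` on `ℝ^d`, then
for every `u` with `u_+ > 0` and `p = (1/u_+) ∑ u_m m` one has, for every `m ∈ A`,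
`w_m β_m(p)/β_w(p) = (w_m/c) u_+^{-a_P} ∏_i ℓ_i(u)^{h_i(m)}` — the explicit
Horn/ML-estimate formula determined by the lattice points of `P`. -/
theorem horn_formula_of_constant_betaW {d r : ℕ} (hd : 0 < d)
    (n : Fin r → Fin d → ℤ) (a : Fin r → ℤ) (A : Finset (Fin d → ℤ))
    (hP : IsFacetPresentation n a A)
    (w : (Fin d → ℤ) → ℝ) (hw : ∀ m ∈ A, 0 < w m)
    (hsum : (∑ i, n i) = 0)
    (c : ℝ) (hc : c ≠ 0) (hconst : ∀ p : Fin d → ℝ, toricBetaW n a A w p = c)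
    (u : (Fin d → ℤ) → ℝ) (hu : 0 < ∑ m ∈ A, u m)
    (p : Fin d → ℝ) (hp : p = (∑ m ∈ A, u m)⁻¹ • ∑ m ∈ A, u m • coeZ m) :
    ∀ m ∈ A,
      w m * toricBeta n a m p / toricBetaW n a A w p =
        (w m / c) * (∑ m' ∈ A, u m') ^ (-(∑ i, a i) : ℤ) *
          ∏ i, (∑ m' ∈ A, (hZ n a i m' : ℝ) * u m') ^ (hZ n a i m).toNat :=
  horn_formula_of_constant_betaW_general n a A hP w hsum c hconst u hu p hp
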